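/- arXiv:1003.3726 — 2 statements merged into one kernel-verified Lean document; each statement's English description precedes it below -/
import Mathlib

section
/- Fix ε ≥ 0 and σ, and let Φ: [0,1] → [0,∞) be continuous nondecreasing with Φ(0)=0 and c u³ ≤ Γ(u) := ∫₀^u Φ ≤ c' u³ on [0,1] for constants 0 < c ≤ c'. Suppose p: (0,∞) → (0,1] is a C² solution of (1/2)p'' = ε p + Φ(p) with p(0⁺) = 1 and p(x) → 0 as x → ∞. Then for every x > 0, ∫_{p(x)}^1 du / √(2ε u² + 4Γ(u)) = x. -/
/-!
Multiplying the equation by `p'` shows that the energy `p'² - (2εp² + 4Γ(p))` is constant.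
Since `p'' ≥ 0`, `p` is convex, so `p → 0` at infinity forces `p' → 0` and `p' < 0`; hence the
energy vanishes and `p' = -√(2εp² + 4Γ(p))`. Therefore `x ↦ ∫_1^{p(x)} du / √(2εu² + 4Γ(u)) + x`
has zero derivative, and its limit at `0⁺` is `0` because `p(0⁺) = 1`.
-/

open Filter Topology Set

theorem eq_of_hasDerivAt_eq_zero_of_tendsto {f : ℝ → ℝ} {a L : ℝ} {l : Filter ℝ} [l.NeBot]
    (hf : ∀ x > a, HasDerivAt f 0 x) (hl : ∀ᶠ x in l, a < x) (hL : Tendsto f l (𝓝 L))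
    {x : ℝ} (hx : a < x) : f x = L := by
  have hconst : ∀ y > a, f y = f x := fun y hy =>
    isOpen_Ioi.is_const_of_deriv_eq_zero isPreconnected_Ioi
      (fun z hz => (hf z hz).differentiableAt.differentiableWithinAt)
      (fun z hz => (hf z hz).deriv) hy hx
  refine tendsto_nhds_unique (tendsto_const_nhds.congr' ?_) hL
  filter_upwards [hl] with y hy using (hconst y hy).symm

theorem ConvexOn.tendsto_deriv_atTop {f f' : ℝ → ℝ} {a L : ℝ} (hfc : ConvexOn ℝ (Ioi a) f)
    (hf : ∀ x > a, HasDerivAt f (f' x) x) (hL : Tendsto f atTop (𝓝 L)) :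
    Tendsto f' atTop (𝓝 0) := by
  have hdiff : ∀ h : ℝ, Tendsto (fun x => f (x + h) - f x) atTop (𝓝 0) := fun h => by
    simpa using (hL.comp (tendsto_atTop_add_const_right _ h tendsto_id)).sub hL
  have hback : Tendsto (fun x => f x - f (x - 1)) atTop (𝓝 0) := by
    simpa [sub_eq_add_neg] using (hdiff (-1)).neg
  refine tendsto_of_tendsto_of_tendsto_of_le_of_le' hback (hdiff 1) ?_ ?_
  · filter_upwards [eventually_gt_atTop (a + 1)] with x hx
    have := hfc.slope_le_of_hasDerivAt (x := x - 1) (by simp; linarith) (by simp; linarith)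
      (by linarith) (hf x (by linarith))
    rwa [slope_def_field, sub_sub_cancel, div_one] at this
  · filter_upwards [eventually_gt_atTop a] with x hx
    have := hfc.le_slope_of_hasDerivAt (y := x + 1) hx (by simp; linarith) (by linarith)
      (hf x hx)
    rwa [slope_def_field, add_sub_cancel_left, div_one] at this

theorem ConvexOn.deriv_neg_of_tendsto_atTop {f f' : ℝ → ℝ} {a L x : ℝ}
    (hfc : ConvexOn ℝ (Ioi a) f) (hf : HasDerivAt f (f' x) x) (hx : a < x)
    (hL : Tendsto f atTop (𝓝 L)) (hLx : L < f x) : f' x < 0 := by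
  obtain ⟨y, hyx, hxy⟩ := ((hL.eventually (gt_mem_nhds hLx)).and (eventually_gt_atTop x)).exists
  calc f' x ≤ slope f x y := hfc.le_slope_of_hasDerivAt hx (hx.trans hxy) hxy hf
    _ < 0 := by
      rw [slope_def_field]
      exact div_neg_of_neg_of_pos (by linarith) (by linarith)

theorem hasDerivAt_integral_of_continuousOn {g : ℝ → ℝ} {U : Set ℝ} {a b : ℝ} (hU : IsOpen U)
    (hg : ContinuousOn g U) (hab : uIcc a b ⊆ U) :
    HasDerivAt (fun x => ∫ t in a..x, g t) (g b) b :=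
  intervalIntegral.integral_hasDerivAt_right ((hg.mono hab).intervalIntegrable)
    (hg.stronglyMeasurableAtFilter hU b (hab right_mem_uIcc))
    (hg.continuousAt (hU.mem_nhds (hab right_mem_uIcc)))

theorem ContinuousOn.exists_continuous_extension_ge {Φ : ℝ → ℝ} {a b : ℝ} (hab : a ≤ b)
    (hcont : ContinuousOn Φ (Icc a b)) (hmono : MonotoneOn Φ (Icc a b)) :
    ∃ Ψ : ℝ → ℝ, Continuous Ψ ∧ (∀ u, Φ a ≤ Ψ u) ∧ EqOn Ψ Φ (Icc a b) := by
  refine ⟨IccExtend hab ((Icc a b).domRestrict Φ), hcont.domRestrict.Icc_extend', fun u => ?_,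
    fun u hu => IccExtend_of_mem hab _ hu⟩
  rw [IccExtend_apply]
  exact hmono (left_mem_Icc.2 hab) (projIcc a b hab u).2 (projIcc a b hab u).2.1

/-- `2εu² + 4∫₀ᵘ Φ`, the value of `p'²` at height `u` along a decaying solution of
`p''/2 = εp + Φ(p)`. -/
noncomputable def energyPotential (ε : ℝ) (Φ : ℝ → ℝ) (u : ℝ) : ℝ :=
  2 * ε * u ^ 2 + 4 * ∫ v in (0:ℝ)..u, Φ v

section energyPotential

variable {ε : ℝ} {Φ : ℝ → ℝ}

@[simp]
theorem energyPotential_zero : energyPotential ε Φ 0 = 0 := by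
  simp [energyPotential]

theorem energyPotential_congr {Ψ : ℝ → ℝ} {u : ℝ} (h : EqOn Φ Ψ (uIcc 0 u)) :
    energyPotential ε Φ u = energyPotential ε Ψ u := by
  rw [energyPotential, energyPotential, intervalIntegral.integral_congr h]

theorem hasDerivAt_energyPotential (hΦ : Continuous Φ) (u : ℝ) :
    HasDerivAt (energyPotential ε Φ) (4 * ε * u + 4 * Φ u) u := by
  have hsq : HasDerivAt (fun u : ℝ => 2 * ε * u ^ 2) (2 * ε * (2 * u)) u := by
    simpa using (hasDerivAt_pow 2 u).const_mul (2 * ε)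
  exact (hsq.add ((hΦ.integral_hasStrictDerivAt 0 u).hasDerivAt.const_mul 4)).congr_deriv
    (by ring)

theorem continuous_energyPotential (hΦ : Continuous Φ) : Continuous (energyPotential ε Φ) :=
  continuous_iff_continuousAt.2 fun u => (hasDerivAt_energyPotential hΦ u).continuousAt

theorem monotoneOn_energyPotential (hε : 0 ≤ ε) (hΦ : Continuous Φ) (hΦnn : ∀ u, 0 ≤ Φ u) :
    MonotoneOn (energyPotential ε Φ) (Ici 0) := by
  refine monotoneOn_of_hasDerivWithinAt_nonneg (convex_Ici 0)
    (continuous_energyPotential hΦ).continuousOn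
    (fun u _ => (hasDerivAt_energyPotential hΦ u).hasDerivWithinAt) fun u hu => ?_
  rw [interior_Ici] at hu
  linarith [hΦnn u, mul_nonneg hε hu.le]

end energyPotential

section ode

variable {ε : ℝ} {Φ p p' p'' : ℝ → ℝ}

theorem convexOn_Ioi_of_ode (hε : 0 ≤ ε) (hΦnn : ∀ u, 0 ≤ Φ u) (hp : ∀ x > 0, 0 < p x)
    (hp' : ∀ x > 0, HasDerivAt p (p' x) x) (hp'' : ∀ x > 0, HasDerivAt p' (p'' x) x)
    (hode : ∀ x > 0, (1 / 2 : ℝ) * p'' x = ε * p x + Φ (p x)) :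
    ConvexOn ℝ (Ioi 0) p := by
  refine convexOn_of_hasDerivWithinAt2_nonneg (f' := p') (f'' := p'') (convex_Ioi 0)
    (fun x hx => (hp' x hx).continuousAt.continuousWithinAt) ?_ ?_ ?_ <;> rw [interior_Ioi]
  · exact fun x hx => (hp' x hx).hasDerivWithinAt
  · exact fun x hx => (hp'' x hx).hasDerivWithinAt
  · exact fun x hx => by linarith [hode x hx, hΦnn (p x), mul_nonneg hε (hp x hx).le]

theorem hasDerivAt_energy (hΦ : Continuous Φ) (hp' : ∀ x > 0, HasDerivAt p (p' x) x)
    (hp'' : ∀ x > 0, HasDerivAt p' (p'' x) x)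
    (hode : ∀ x > 0, (1 / 2 : ℝ) * p'' x = ε * p x + Φ (p x)) {x : ℝ} (hx : 0 < x) :
    HasDerivAt (fun x => p' x ^ 2 - energyPotential ε Φ (p x)) 0 x := by
  have hkin : HasDerivAt (fun x => p' x ^ 2) (2 * p' x * p'' x) x := by
    simpa using (hp'' x hx).fun_pow 2
  have hpot := (hasDerivAt_energyPotential (ε := ε) hΦ (p x)).comp x (hp' x hx)
  refine (hkin.sub hpot).congr_deriv ?_
  linear_combination (4 * p' x) * hode x hx

theorem deriv_neg_of_ode (hε : 0 ≤ ε) (hΦnn : ∀ u, 0 ≤ Φ u) (hp : ∀ x > 0, 0 < p x)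
    (hp' : ∀ x > 0, HasDerivAt p (p' x) x) (hp'' : ∀ x > 0, HasDerivAt p' (p'' x) x)
    (hode : ∀ x > 0, (1 / 2 : ℝ) * p'' x = ε * p x + Φ (p x))
    (hinf : Tendsto p atTop (𝓝 0)) {x : ℝ} (hx : 0 < x) : p' x < 0 :=
  (convexOn_Ioi_of_ode hε hΦnn hp hp' hp'' hode).deriv_neg_of_tendsto_atTop (hp' x hx) hx hinf
    (hp x hx)

theorem deriv_sq_eq_energyPotential (hε : 0 ≤ ε) (hΦ : Continuous Φ) (hΦnn : ∀ u, 0 ≤ Φ u)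
    (hp : ∀ x > 0, 0 < p x) (hp' : ∀ x > 0, HasDerivAt p (p' x) x)
    (hp'' : ∀ x > 0, HasDerivAt p' (p'' x) x)
    (hode : ∀ x > 0, (1 / 2 : ℝ) * p'' x = ε * p x + Φ (p x))
    (hinf : Tendsto p atTop (𝓝 0)) {x : ℝ} (hx : 0 < x) :
    p' x ^ 2 = energyPotential ε Φ (p x) := by
  have hp'lim := (convexOn_Ioi_of_ode hε hΦnn hp hp' hp'' hode).tendsto_deriv_atTop hp' hinf
  have hlim : Tendsto (fun x => p' x ^ 2 - energyPotential ε Φ (p x)) atTop (𝓝 0) := by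
    simpa using (hp'lim.pow 2).sub (((continuous_energyPotential hΦ).tendsto 0).comp hinf)
  exact sub_eq_zero.1 (eq_of_hasDerivAt_eq_zero_of_tendsto
    (fun y hy => hasDerivAt_energy hΦ hp' hp'' hode hy) (eventually_gt_atTop 0) hlim hx)

theorem energyPotential_pos_of_ode (hε : 0 ≤ ε) (hΦ : Continuous Φ) (hΦnn : ∀ u, 0 ≤ Φ u)
    (hp : ∀ x > 0, 0 < p x) (hp' : ∀ x > 0, HasDerivAt p (p' x) x)
    (hp'' : ∀ x > 0, HasDerivAt p' (p'' x) x)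
    (hode : ∀ x > 0, (1 / 2 : ℝ) * p'' x = ε * p x + Φ (p x))
    (hinf : Tendsto p atTop (𝓝 0)) {x u : ℝ} (hx : 0 < x) (hu : p x ≤ u) :
    0 < energyPotential ε Φ u :=
  calc 0 < p' x ^ 2 := sq_pos_of_neg (deriv_neg_of_ode hε hΦnn hp hp' hp'' hode hinf hx)
    _ = energyPotential ε Φ (p x) := deriv_sq_eq_energyPotential hε hΦ hΦnn hp hp' hp'' hode hinf hx
    _ ≤ energyPotential ε Φ u := monotoneOn_energyPotential hε hΦ hΦnn (hp x hx).le
        ((hp x hx).le.trans hu) hu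

theorem integral_inv_sqrt_energyPotential_eq (hε : 0 ≤ ε) (hΦ : Continuous Φ)
    (hΦnn : ∀ u, 0 ≤ Φ u) (hp : ∀ x > 0, p x ∈ Ioc 0 1)
    (hp' : ∀ x > 0, HasDerivAt p (p' x) x) (hp'' : ∀ x > 0, HasDerivAt p' (p'' x) x)
    (hode : ∀ x > 0, (1 / 2 : ℝ) * p'' x = ε * p x + Φ (p x))
    (h0 : Tendsto p (𝓝[>] 0) (𝓝 1)) (hinf : Tendsto p atTop (𝓝 0)) {x : ℝ} (hx : 0 < x) :
    ∫ u in p x..1, 1 / √(energyPotential ε Φ u) = x := by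
  have hpos : ∀ x > 0, 0 < p x := fun x hx => (hp x hx).1
  have hneg : ∀ z > 0, p' z < 0 := fun z hz => deriv_neg_of_ode hε hΦnn hpos hp' hp'' hode hinf hz
  have hsq : ∀ z > 0, p' z ^ 2 = energyPotential ε Φ (p z) := fun z hz =>
    deriv_sq_eq_energyPotential hε hΦ hΦnn hpos hp' hp'' hode hinf hz
  set g : ℝ → ℝ := fun u => 1 / √(energyPotential ε Φ u)
  set U := {u | 0 < energyPotential ε Φ u}
  have hU : IsOpen U := isOpen_lt continuous_const (continuous_energyPotential hΦ)
  have hg : ContinuousOn g U := fun u hu =>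
    (continuousAt_const.div (continuous_energyPotential hΦ).sqrt.continuousAt
      (Real.sqrt_pos.2 hu).ne').continuousWithinAt
  have hsub : ∀ z > 0, uIcc 1 (p z) ⊆ U := by
    intro z hz u hu
    rw [uIcc_of_ge (hp z hz).2] at hu
    exact energyPotential_pos_of_ode hε hΦ hΦnn hpos hp' hp'' hode hinf hz hu.1
  set G : ℝ → ℝ := fun y => ∫ u in (1:ℝ)..y, g u
  have hH : ∀ z > 0, HasDerivAt (fun z => G (p z) + z) 0 z := by
    intro z hz
    have hG := (hasDerivAt_integral_of_continuousOn hU hg (hsub z hz)).comp z (hp' z hz)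
    refine (hG.add (hasDerivAt_id z)).congr_deriv ?_
    have hsqrt : √(energyPotential ε Φ (p z)) = -p' z := by
      rw [← hsq z hz, Real.sqrt_sq_eq_abs, abs_of_neg (hneg z hz)]
    simp only [g, hsqrt]
    field_simp [(hneg z hz).ne]
    ring
  have hlim : Tendsto (fun z => G (p z) + z) (𝓝[>] 0) (𝓝 0) := by
    have hG1 : ContinuousAt G 1 := (hasDerivAt_integral_of_continuousOn hU hg
      ((uIcc_subset_uIcc left_mem_uIcc left_mem_uIcc).trans (hsub x hx))).continuousAt
    simpa [G] using (hG1.tendsto.comp h0).add (tendsto_nhdsWithin_of_tendsto_nhds tendsto_id)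
  have hHx := eq_of_hasDerivAt_eq_zero_of_tendsto (l := 𝓝[>] 0) hH self_mem_nhdsWithin hlim hx
  rw [intervalIntegral.integral_symm]
  simp only [G] at hHx
  linarith

end ode

theorem ode_first_integral_general (ε : ℝ) (hε : 0 ≤ ε)
    (Φ : ℝ → ℝ)
    (hΦcont : ContinuousOn Φ (Set.Icc 0 1))
    (hΦmono : MonotoneOn Φ (Set.Icc 0 1))
    (hΦ0 : Φ 0 = 0)
    (p p' p'' : ℝ → ℝ)
    (hrange : ∀ x > (0:ℝ), p x ∈ Set.Ioc (0:ℝ) 1)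
    (hderiv1 : ∀ x > (0:ℝ), HasDerivAt p (p' x) x)
    (hderiv2 : ∀ x > (0:ℝ), HasDerivAt p' (p'' x) x)
    (hode : ∀ x > (0:ℝ), (1/2 : ℝ) * p'' x = ε * p x + Φ (p x))
    (hbdry0 : Tendsto p (𝓝[>] 0) (𝓝 1))
    (hbdryinf : Tendsto p atTop (𝓝 0)) :
    ∀ x > (0:ℝ),
      (∫ u in (p x)..1,
        1 / Real.sqrt (2 * ε * u ^ 2 + 4 * (∫ v in (0:ℝ)..u, Φ v))) = x := by
  intro x hx
  obtain ⟨Ψ, hΨ, hΨnn, hΨΦ⟩ := hΦcont.exists_continuous_extension_ge zero_le_one hΦmono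
  rw [hΦ0] at hΨnn
  have hodeΨ : ∀ x > 0, (1 / 2 : ℝ) * p'' x = ε * p x + Ψ (p x) := fun x hx => by
    rw [hΨΦ (Ioc_subset_Icc_self (hrange x hx))]
    exact hode x hx
  refine Eq.trans (intervalIntegral.integral_congr fun u hu => ?_)
    (integral_inv_sqrt_energyPotential_eq hε hΨ hΨnn hrange hderiv1 hderiv2 hodeΨ hbdry0
      hbdryinf hx)
  rw [uIcc_of_le (hrange x hx).2] at hu
  have hu0 : 0 ≤ u := (hrange x hx).1.le.trans hu.1
  have hsub : uIcc 0 u ⊆ Icc 0 1 := by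
    rw [uIcc_of_le hu0]
    exact Icc_subset_Icc_right hu.2
  exact congrArg (fun t => 1 / √t) (energyPotential_congr (hΨΦ.symm.mono hsub))

/-- If p : (0,∞) → (0,1] is a C² solution of (1/2)p'' = εp + Φ(p)
with p(0⁺)=1 and p(∞)=0, where Γ(u) = ∫₀ᵘ Φ satisfies c u³ ≤ Γ(u) ≤ c' u³ on [0,1],
then ∫_{p(x)}^1 du/√(2εu² + 4Γ(u)) = x for every x > 0. -/
theorem ode_first_integral (ε σ c c' : ℝ) (hε : 0 ≤ ε) (hσ : 0 < σ)
    (hc : 0 < c) (hcc' : c ≤ c')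
    (Φ : ℝ → ℝ)
    (hΦcont : ContinuousOn Φ (Set.Icc 0 1))
    (hΦmono : MonotoneOn Φ (Set.Icc 0 1))
    (hΦ0 : Φ 0 = 0)
    (hΓ : ∀ u ∈ Set.Icc (0:ℝ) 1,
      c * u ^ 3 ≤ (∫ v in (0:ℝ)..u, Φ v) ∧ (∫ v in (0:ℝ)..u, Φ v) ≤ c' * u ^ 3)
    (p p' p'' : ℝ → ℝ)
    (hrange : ∀ x > (0:ℝ), p x ∈ Set.Ioc (0:ℝ) 1)
    (hderiv1 : ∀ x > (0:ℝ), HasDerivAt p (p' x) x)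
    (hderiv2 : ∀ x > (0:ℝ), HasDerivAt p' (p'' x) x)
    (hode : ∀ x > (0:ℝ), (1/2 : ℝ) * p'' x = ε * p x + Φ (p x))
    (hbdry0 : Tendsto p (𝓝[>] 0) (𝓝 1))
    (hbdryinf : Tendsto p atTop (𝓝 0)) :
    ∀ x > (0:ℝ),
      (∫ u in (p x)..1,
        1 / Real.sqrt (2 * ε * u ^ 2 + 4 * (∫ v in (0:ℝ)..u, Φ v))) = x :=
  ode_first_integral_general ε hε Φ hΦcont hΦmono hΦ0 p p' p'' hrange hderiv1 hderiv2 hode hbdry0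
    hbdryinf
end

section
/- Let h ∈ C¹(ℝ^d) be bounded with bounded gradient, let B ⊂ ℝ^d be a fixed closed ball, and let Γ ⊂ ℝ^d be any measurable set. For ε ∈ (0,1) define U'_ε = ∫_B h(x) 1_{√ε·Γ}(x) dx. Then for every k ∈ ℕ and every ε ∈ [(k+1)^{-3}, k^{-3}], |U'_ε - U'_{ε_k}| ≤ (1 - (εk³)^{d/2})·‖h‖·λ_d(B) + (C'/k)‖∇h‖ + (C''/k)‖h‖, where ε_k = k^{-3} and C', C'' depend only on B and d. Consequently sup_{(k+1)^{-3} ≤ ε ≤ k^{-3}} |U'_ε - U'_{ε_k}| → 0 as k → ∞. -/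
/-!
Put `F = 1_B h`, `A = √ε • Γ` and `c = √(ε_k / ε) ∈ [1, 1 + 3/k]`. Substituting `x ↦ c • x` in
`U'_{ε_k} = ∫_{c • A} F` gives `|U'_ε - U'_{ε_k}| ≤ ∫ |F x - c ^ d F (c • x)| dx`, a bound in
which `Γ` no longer appears. Three errors make up this `L¹` distance, each `O(c - 1)`: the factor
`c ^ d - 1`, by Bernoulli's inequality; the oscillation `|h x - h (c • x)|` on `B`, by the gradient
bound; and the points `x` for which exactly one of `x`, `c • x` lies in `B`, which fill an annulus
of width `O(c - 1)` around the boundary sphere.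
-/

open Filter Topology MeasureTheory Metric Module Set Pointwise

lemma one_sub_inv_pow_le {c : ℝ} (hc : 1 ≤ c) (n : ℕ) : 1 - (c ^ n)⁻¹ ≤ n * (c - 1) := by
  have hc0 : 0 < c := by linarith
  have hbern := one_add_mul_le_pow (a := c⁻¹ - 1) (by linarith [inv_pos.2 hc0]) n
  rw [add_sub_cancel, inv_pow] at hbern
  have : 1 - c⁻¹ ≤ c - 1 := by
    nlinarith [mul_inv_cancel₀ hc0.ne', inv_pos.2 hc0]
  nlinarith [n.cast_nonneg (α := ℝ)]

lemma setIntegral_mul_indicator_one {α : Type*} [MeasurableSpace α] {μ : Measure α} {s t : Set α}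
    (hs : MeasurableSet s) (ht : MeasurableSet t) (f : α → ℝ) :
    ∫ x in s, f x * t.indicator 1 x ∂μ = ∫ x in t, s.indicator f x ∂μ := by
  rw [← integral_indicator hs, ← integral_indicator ht]
  congr 1 with x
  by_cases hxs : x ∈ s <;> by_cases hxt : x ∈ t <;> simp [hxs, hxt]

lemma abs_indicator_sub_indicator_le {α : Type*} (s : Set α) {f : α → ℝ} {M : ℝ}
    (hf : ∀ x, |f x| ≤ M) (x y : α) :
    |s.indicator f x - s.indicator f y| ≤
      s.indicator (fun x => |f x - f y|) x + M * |s.indicator 1 x - s.indicator 1 y| := by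
  by_cases hx : x ∈ s <;> by_cases hy : y ∈ s <;> simp [hx, hy]
  · linarith [abs_sub_abs_le_abs_sub (f x) (f y), hf y]
  · exact hf y

lemma abs_indicator_closedBall_sub_le {α : Type*} [PseudoMetricSpace α] {x y z : α} {ρ δ : ℝ}
    (hxy : x ∈ closedBall z ρ ∨ y ∈ closedBall z ρ → dist x y ≤ δ) :
    |(closedBall z ρ).indicator 1 x - (closedBall z ρ).indicator (1 : α → ℝ) y| ≤
      (closedBall z (ρ + δ) \ ball z (ρ - δ)).indicator 1 x := by
  have hnonneg : 0 ≤ (closedBall z (ρ + δ) \ ball z (ρ - δ)).indicator (1 : α → ℝ) x :=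
    indicator_nonneg (fun _ _ => zero_le_one) x
  by_cases hx : x ∈ closedBall z ρ <;> by_cases hy : y ∈ closedBall z ρ
  · simpa [hx, hy] using hnonneg
  · have hδ := hxy (Or.inl hx)
    rw [mem_closedBall] at hx hy
    have hmem : x ∈ closedBall z (ρ + δ) \ ball z (ρ - δ) :=
      ⟨mem_closedBall.2 (by linarith [dist_nonneg (x := x) (y := y)]),
        fun h => by linarith [mem_ball.1 h, dist_triangle y x z, dist_comm x y]⟩
    simp [hx, hy, hmem]
  · have hδ := hxy (Or.inr hy)
    rw [mem_closedBall] at hx hy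
    have hmem : x ∈ closedBall z (ρ + δ) \ ball z (ρ - δ) :=
      ⟨mem_closedBall.2 (by linarith [dist_triangle x y z]),
        fun h => by linarith [mem_ball.1 h, dist_nonneg (x := x) (y := y)]⟩
    simp [hx, hy, hmem]
  · simpa [hx, hy] using hnonneg

lemma sqrt_div_sqrt_mem_Icc_of_mem_Icc {k : ℕ} (hk : 1 ≤ k) {ε : ℝ}
    (hε : ε ∈ Icc (((k : ℝ) + 1) ^ 3)⁻¹ ((k : ℝ) ^ 3)⁻¹) :
    √((k : ℝ) ^ 3)⁻¹ / √ε ∈ Icc (1 : ℝ) (1 + 3 / k) := by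
  have hk0 : (1 : ℝ) ≤ k := by exact_mod_cast hk
  have hε0 : 0 < ε := lt_of_lt_of_le (by positivity) hε.1
  rw [← Real.sqrt_div' _ hε0.le]
  constructor
  · exact Real.one_le_sqrt.2 ((one_le_div hε0).2 hε.2)
  · rw [Real.sqrt_le_left (by positivity), div_le_iff₀ hε0]
    calc ((k : ℝ) ^ 3)⁻¹ ≤ (1 + 3 / k) ^ 2 * (((k : ℝ) + 1) ^ 3)⁻¹ := by
          rw [← div_eq_mul_inv, le_div_iff₀ (by positivity)]
          field_simp
          nlinarith
      _ ≤ (1 + 3 / k) ^ 2 * ε := by gcongr; exact hε.1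

section Dilation

variable {E : Type*} [NormedAddCommGroup E] [NormedSpace ℝ E]

lemma dist_smul_self_le_of_mem_closedBall {x z : E} {ρ c : ℝ} (hc : 1 ≤ c)
    (hx : x ∈ closedBall z ρ ∨ c • x ∈ closedBall z ρ) :
    dist x (c • x) ≤ (c - 1) * (‖z‖ + ρ) := by
  have hnorm : ‖x‖ ≤ ‖c • x‖ := by
    rw [norm_smul, Real.norm_of_nonneg (by linarith)]
    exact le_mul_of_one_le_left (norm_nonneg x) hc
  have hx' : ‖x‖ ≤ ‖z‖ + ρ :=
    hx.elim norm_le_of_mem_closedBall (hnorm.trans ∘ norm_le_of_mem_closedBall)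
  calc dist x (c • x) = (c - 1) * ‖x‖ := by
        rw [dist_comm, dist_eq_norm, show c • x - x = (c - 1) • x by rw [sub_smul, one_smul],
          norm_smul, Real.norm_of_nonneg (by linarith)]
    _ ≤ (c - 1) * (‖z‖ + ρ) := by gcongr

variable [MeasurableSpace E] [BorelSpace E] [FiniteDimensional ℝ E] (μ : Measure E)
  [μ.IsAddHaarMeasure]

lemma measureReal_closedBall_sdiff_ball_le [Nontrivial E] (z : E) {r R : ℝ} (hrR : r ≤ R)
    (hR : 0 ≤ R) :
    μ.real (closedBall z R \ ball z r) ≤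
      (R - r) * finrank ℝ E * R ^ (finrank ℝ E - 1) * μ.real (closedBall 0 1) := by
  set n := finrank ℝ E
  have hn : 0 < n := finrank_pos
  have hω : 0 ≤ μ.real (closedBall (0 : E) 1) := measureReal_nonneg
  rw [measureReal_sdiff (ball_subset_closedBall.trans (closedBall_subset_closedBall hrR))
    measurableSet_ball measure_closedBall_lt_top.ne, Measure.addHaar_real_closedBall' μ z hR]
  rcases le_or_gt 0 r with hr | hr
  · rw [← Measure.addHaar_real_closedBall_eq_addHaar_real_ball,
      Measure.addHaar_real_closedBall' μ z hr, ← sub_mul]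
    have := abs_pow_sub_pow_le R r n
    rw [abs_of_nonneg (sub_nonneg.2 hrR), abs_of_nonneg hR, abs_of_nonneg hr,
      max_eq_left hrR] at this
    gcongr
    exact (le_abs_self _).trans this
  · rw [ball_eq_empty.2 hr.le, measureReal_empty, sub_zero]
    have hpow : R ^ n = R * R ^ (n - 1) := by rw [← pow_succ', Nat.sub_add_cancel hn]
    have : R ≤ (R - r) * n := by
      nlinarith [(Nat.one_le_cast (α := ℝ)).2 hn]
    rw [hpow]
    gcongr

lemma abs_setIntegral_sub_setIntegral_smul_le {F : E → ℝ} (hF : Integrable F μ) (A : Set E)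
    {c : ℝ} (hc : 0 < c) :
    |∫ x in A, F x ∂μ - ∫ x in c • A, F x ∂μ| ≤
      ∫ x, |F x - c ^ finrank ℝ E * F (c • x)| ∂μ := by
  have hFc : Integrable (fun x => c ^ finrank ℝ E * F (c • x)) μ :=
    (hF.comp_smul hc.ne').const_mul _
  have hscale : ∫ x in c • A, F x ∂μ = ∫ x in A, c ^ finrank ℝ E * F (c • x) ∂μ := by
    rw [integral_const_mul, Measure.setIntegral_comp_smul_of_pos μ F A hc, smul_eq_mul,
      mul_inv_cancel_left₀ (pow_ne_zero _ hc.ne')]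
  rw [hscale, ← integral_sub hF.integrableOn hFc.integrableOn]
  exact abs_integral_le_integral_abs.trans
    (setIntegral_le_integral (hF.sub hFc).abs (.of_forall fun _ => abs_nonneg _))

lemma integral_abs_sub_pow_mul_comp_smul_le {F : E → ℝ} (hF : Integrable F μ) {c : ℝ}
    (hc : 1 ≤ c) :
    ∫ x, |F x - c ^ finrank ℝ E * F (c • x)| ∂μ ≤
      ∫ x, |F x - F (c • x)| ∂μ + finrank ℝ E * (c - 1) * ∫ x, |F x| ∂μ := by
  set n := finrank ℝ E
  have hc0 : 0 < c := by linarith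
  have hpow : 1 ≤ c ^ n := one_le_pow₀ hc
  have hFc : Integrable (fun x => F (c • x)) μ := hF.comp_smul hc0.ne'
  have hdiff : Integrable (fun x => |F x - F (c • x)|) μ := (hF.sub hFc).abs
  calc ∫ x, |F x - c ^ n * F (c • x)| ∂μ
      ≤ ∫ x, (|F x - F (c • x)| + (c ^ n - 1) * |F (c • x)|) ∂μ := by
        refine integral_mono_of_nonneg (.of_forall fun _ => abs_nonneg _)
          (hdiff.add (hFc.abs.const_mul _)) (.of_forall fun x => ?_)
        calc |F x - c ^ n * F (c • x)| = |(F x - F (c • x)) - (c ^ n - 1) * F (c • x)| := by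
              ring_nf
          _ ≤ |F x - F (c • x)| + |(c ^ n - 1) * F (c • x)| := abs_sub _ _
          _ = _ := by rw [abs_mul, abs_of_nonneg (sub_nonneg.2 hpow)]
    _ = ∫ x, |F x - F (c • x)| ∂μ + (1 - (c ^ n)⁻¹) * ∫ x, |F x| ∂μ := by
        rw [integral_add hdiff (hFc.abs.const_mul _), integral_const_mul,
          Measure.integral_comp_smul μ (fun x => |F x|), abs_of_pos (by positivity), smul_eq_mul,
          ← mul_assoc, sub_mul, mul_inv_cancel₀ (by positivity), one_mul]
    _ ≤ _ := by
        gcongr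
        exact one_sub_inv_pow_le hc n

lemma integral_abs_indicator_closedBall_sub_comp_smul_le (z : E) (ρ : ℝ) {h : E → ℝ}
    {Mh Mg : ℝ} (hMh : ∀ x, |h x| ≤ Mh) (hMg : 0 ≤ Mg)
    (hlip : ∀ x y, ‖h x - h y‖ ≤ Mg * ‖x - y‖) {c : ℝ} (hc : 1 ≤ c) :
    ∫ x, |(closedBall z ρ).indicator h x - (closedBall z ρ).indicator h (c • x)| ∂μ ≤
      Mg * ((c - 1) * (‖z‖ + ρ)) * μ.real (closedBall z ρ) +
        Mh * μ.real (closedBall z (ρ + (c - 1) * (‖z‖ + ρ)) \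
          ball z (ρ - (c - 1) * (‖z‖ + ρ))) := by
  set B := closedBall z ρ
  set t := (c - 1) * (‖z‖ + ρ)
  set S := closedBall z (ρ + t) \ ball z (ρ - t)
  have hMh0 : 0 ≤ Mh := (abs_nonneg _).trans (hMh 0)
  have hS : MeasurableSet S := measurableSet_closedBall.diff measurableSet_ball
  have hbound : ∀ x, |B.indicator h x - B.indicator h (c • x)| ≤
      B.indicator (fun _ => Mg * t) x + Mh * S.indicator 1 x := by
    intro x
    have hdist := dist_smul_self_le_of_mem_closedBall (x := x) (z := z) (ρ := ρ) hc
    refine (abs_indicator_sub_indicator_le B hMh x (c • x)).trans (add_le_add ?_ ?_)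
    · refine indicator_le_indicator' fun hx => ?_
      calc |h x - h (c • x)| ≤ Mg * ‖x - c • x‖ := hlip x (c • x)
        _ ≤ Mg * t := by rw [← dist_eq_norm]; gcongr; exact hdist (.inl hx)
    · gcongr
      exact abs_indicator_closedBall_sub_le hdist
  have hBint : Integrable (B.indicator fun _ => Mg * t) μ :=
    (integrableOn_const measure_closedBall_lt_top.ne).integrable_indicator measurableSet_closedBall
  have hSint : Integrable (S.indicator (1 : E → ℝ)) μ :=
    (integrableOn_const ((measure_mono sdiff_subset).trans_lt measure_closedBall_lt_top).ne
      ).integrable_indicator hS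
  calc _ ≤ ∫ x, (B.indicator (fun _ => Mg * t) x + Mh * S.indicator 1 x) ∂μ :=
        integral_mono_of_nonneg (.of_forall fun _ => abs_nonneg _) (hBint.add (hSint.const_mul _))
          (.of_forall hbound)
    _ = _ := by
        rw [integral_add hBint (hSint.const_mul _), integral_const_mul,
          integral_indicator_const _ measurableSet_closedBall, integral_indicator_one hS,
          smul_eq_mul, mul_comm (μ.real B)]

theorem abs_setIntegral_mul_indicator_sub_smul_le (z : E) {ρ : ℝ} (hρ : 0 ≤ ρ) {h : E → ℝ}
    (hh : Continuous h) {Mh Mg : ℝ} (hMh : ∀ x, |h x| ≤ Mh) (hMg : 0 ≤ Mg)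
    (hlip : ∀ x y, ‖h x - h y‖ ≤ Mg * ‖x - y‖) {A : Set E} (hA : MeasurableSet A)
    {c : ℝ} (hc : 1 ≤ c) :
    |∫ x in closedBall z ρ, h x * A.indicator 1 x ∂μ -
        ∫ x in closedBall z ρ, h x * (c • A).indicator 1 x ∂μ| ≤
      (c - 1) * (Mg * ((‖z‖ + ρ) * μ.real (closedBall z ρ)) +
        Mh * (finrank ℝ E * (2 * (‖z‖ + ρ) * (ρ + (c - 1) * (‖z‖ + ρ)) ^ (finrank ℝ E - 1) *
          μ.real (closedBall 0 1) + μ.real (closedBall z ρ)))) := by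
  have hMh0 : 0 ≤ Mh := (abs_nonneg _).trans (hMh 0)
  rcases subsingleton_or_nontrivial E with hE | hE
  · have hcA : c • A = A := Set.ext fun x =>
      ⟨fun ⟨y, hy, hyx⟩ => Subsingleton.elim y x ▸ hy, fun hx => ⟨x, hx, Subsingleton.elim _ _⟩⟩
    rw [hcA, sub_self, abs_zero]
    exact mul_nonneg (sub_nonneg.2 hc) (by positivity)
  set B := closedBall z ρ
  set F := B.indicator h
  set t := (c - 1) * (‖z‖ + ρ)
  have hF : Integrable F μ :=
    (hh.continuousOn.integrableOn_compact (isCompact_closedBall z ρ)).integrable_indicator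
      measurableSet_closedBall
  have hFabs : ∫ x, |F x| ∂μ ≤ Mh * μ.real B := by
    calc ∫ x, |F x| ∂μ ≤ ∫ x, B.indicator (fun _ => Mh) x ∂μ :=
          integral_mono hF.abs
            ((integrableOn_const measure_closedBall_lt_top.ne).integrable_indicator
              measurableSet_closedBall)
            fun x => by by_cases hx : x ∈ B <;> simp [F, hx, hMh x]
      _ = Mh * μ.real B := by
          rw [integral_indicator_const _ measurableSet_closedBall, smul_eq_mul, mul_comm]
  have ht : 0 ≤ t := mul_nonneg (sub_nonneg.2 hc) (by positivity)
  have hann := measureReal_closedBall_sdiff_ball_le μ z (r := ρ - t) (R := ρ + t)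
    (by linarith) (by positivity)
  rw [setIntegral_mul_indicator_one measurableSet_closedBall hA,
    setIntegral_mul_indicator_one measurableSet_closedBall (hA.const_smul₀ c)]
  calc _ ≤ ∫ x, |F x - c ^ finrank ℝ E * F (c • x)| ∂μ :=
        abs_setIntegral_sub_setIntegral_smul_le μ hF A (by linarith)
    _ ≤ ∫ x, |F x - F (c • x)| ∂μ + finrank ℝ E * (c - 1) * ∫ x, |F x| ∂μ :=
        integral_abs_sub_pow_mul_comp_smul_le μ hF hc
    _ ≤ Mg * t * μ.real B + Mh * μ.real (closedBall z (ρ + t) \ ball z (ρ - t)) +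
          finrank ℝ E * (c - 1) * (Mh * μ.real B) := by
        gcongr
        exact integral_abs_indicator_closedBall_sub_comp_smul_le μ z ρ hMh hMg hlip hc
    _ ≤ Mg * t * μ.real B +
          Mh * ((ρ + t - (ρ - t)) * finrank ℝ E * (ρ + t) ^ (finrank ℝ E - 1) *
            μ.real (closedBall 0 1)) + finrank ℝ E * (c - 1) * (Mh * μ.real B) := by
        gcongr
    _ = _ := by ring

theorem abs_setIntegral_mul_indicator_sqrt_smul_sub_le (z : E) {ρ : ℝ} (hρ : 0 ≤ ρ)
    {h : E → ℝ} (hh : Continuous h) {Mh Mg : ℝ} (hMh : ∀ x, |h x| ≤ Mh) (hMg : 0 ≤ Mg)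
    (hlip : ∀ x y, ‖h x - h y‖ ≤ Mg * ‖x - y‖) {Γ : Set E} (hΓ : MeasurableSet Γ)
    {k : ℕ} (hk : 1 ≤ k) {ε : ℝ} (hε : ε ∈ Icc (((k : ℝ) + 1) ^ 3)⁻¹ ((k : ℝ) ^ 3)⁻¹) :
    |∫ x in closedBall z ρ, h x * (√ε • Γ).indicator 1 x ∂μ -
        ∫ x in closedBall z ρ, h x * (√((k : ℝ) ^ 3)⁻¹ • Γ).indicator 1 x ∂μ| ≤
      3 / k * (Mg * ((‖z‖ + ρ) * μ.real (closedBall z ρ)) +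
        Mh * (finrank ℝ E * (2 * (‖z‖ + ρ) * (4 * (‖z‖ + ρ)) ^ (finrank ℝ E - 1) *
          μ.real (closedBall 0 1) + μ.real (closedBall z ρ)))) := by
  have hε0 : 0 < ε := lt_of_lt_of_le (by positivity) hε.1
  obtain ⟨hc1, hc⟩ := sqrt_div_sqrt_mem_Icc_of_mem_Icc hk hε
  set c := √((k : ℝ) ^ 3)⁻¹ / √ε
  have hsmul : √((k : ℝ) ^ 3)⁻¹ • Γ = c • √ε • Γ := by
    rw [smul_smul, div_mul_cancel₀ _ (Real.sqrt_pos.2 hε0).ne']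
  have hc3 : c - 1 ≤ 3 := by
    have : 3 / (k : ℝ) ≤ 3 := div_le_self (by norm_num) (by exact_mod_cast hk)
    linarith
  rw [hsmul]
  refine (abs_setIntegral_mul_indicator_sub_smul_le μ z hρ hh hMh hMg hlip
    (hΓ.const_smul₀ _) hc1).trans ?_
  have hMh0 : 0 ≤ Mh := (abs_nonneg _).trans (hMh 0)
  gcongr
  · linarith
  · nlinarith [norm_nonneg z]

end Dilation

/-- Interpolation lemma: for U'_ε = ∫_B h·1_{√ε Γ}, with ε_k = k⁻³,
for all ε ∈ [(k+1)⁻³, k⁻³],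
|U'_ε - U'_{ε_k}| ≤ (1-(εk³)^{d/2})‖h‖λ(B) + (C'/k)‖∇h‖ + (C''/k)‖h‖,
with C', C'' depending only on the ball B and d; consequently the sup over this
range of ε tends to 0 as k → ∞. -/
theorem scaling_interpolation (d : ℕ) (z : EuclideanSpace ℝ (Fin d)) (ρ : ℝ) (hρ : 0 < ρ) :
    ∃ C' C'' : ℝ, 0 < C' ∧ 0 < C'' ∧
    ∀ (Γ : Set (EuclideanSpace ℝ (Fin d))), MeasurableSet Γ →
    ∀ (h : EuclideanSpace ℝ (Fin d) → ℝ) (Mh Mg : ℝ),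
      ContDiff ℝ 1 h → (∀ x, |h x| ≤ Mh) → (∀ x, ‖fderiv ℝ h x‖ ≤ Mg) →
      (∀ k : ℕ, 1 ≤ k → ∀ ε ∈ Set.Icc (((k:ℝ)+1)^3)⁻¹ (((k:ℝ))^3)⁻¹,
        |(∫ x in Metric.closedBall z ρ,
            h x * Set.indicator (Real.sqrt ε • Γ) (fun _ => (1:ℝ)) x) -
          (∫ x in Metric.closedBall z ρ,
            h x * Set.indicator (Real.sqrt (((k:ℝ)^3)⁻¹) • Γ) (fun _ => (1:ℝ)) x)| ≤
          (1 - (ε * (k:ℝ)^3) ^ ((d:ℝ)/2)) * Mh *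
              (volume (Metric.closedBall z ρ)).toReal +
            (C' / k) * Mg + (C'' / k) * Mh) ∧
      (∀ η > (0:ℝ), ∀ᶠ k : ℕ in atTop, ∀ ε ∈ Set.Icc (((k:ℝ)+1)^3)⁻¹ (((k:ℝ))^3)⁻¹,
        |(∫ x in Metric.closedBall z ρ,
            h x * Set.indicator (Real.sqrt ε • Γ) (fun _ => (1:ℝ)) x) -
          (∫ x in Metric.closedBall z ρ,
            h x * Set.indicator (Real.sqrt (((k:ℝ)^3)⁻¹) • Γ) (fun _ => (1:ℝ)) x)| ≤ η) := by
  set a := (‖z‖ + ρ) * volume.real (closedBall z ρ)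
  set b := d * (2 * (‖z‖ + ρ) * (4 * (‖z‖ + ρ)) ^ (d - 1) *
    volume.real (closedBall (0 : EuclideanSpace ℝ (Fin d)) 1) + volume.real (closedBall z ρ))
  refine ⟨3 * a + 1, 3 * b + 1, by positivity, by positivity, fun Γ hΓ h Mh Mg hh hMh hMg => ?_⟩
  have hMh0 : 0 ≤ Mh := (abs_nonneg _).trans (hMh 0)
  have hMg0 : 0 ≤ Mg := (norm_nonneg _).trans (hMg 0)
  have hlip : ∀ x y, ‖h x - h y‖ ≤ Mg * ‖x - y‖ := fun x y =>
    convex_univ.norm_image_sub_le_of_norm_fderiv_le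
      (fun u _ => (hh.differentiable one_ne_zero).differentiableAt) (fun u _ => hMg u)
      (mem_univ y) (mem_univ x)
  have hbound : ∀ k : ℕ, 1 ≤ k → ∀ ε ∈ Icc (((k : ℝ) + 1) ^ 3)⁻¹ ((k : ℝ) ^ 3)⁻¹,
      |(∫ x in closedBall z ρ, h x * (√ε • Γ).indicator (fun _ => (1 : ℝ)) x) -
        ∫ x in closedBall z ρ, h x * (√((k : ℝ) ^ 3)⁻¹ • Γ).indicator (fun _ => (1 : ℝ)) x| ≤
        3 / k * (Mg * a + Mh * b) := fun k hk ε hε => by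
    have := abs_setIntegral_mul_indicator_sqrt_smul_sub_le volume z hρ.le hh.continuous hMh hMg0
      hlip hΓ hk hε
    rwa [finrank_euclideanSpace_fin] at this
  refine ⟨fun k hk ε hε => ?_, fun η hη => ?_⟩
  · have hε0 : 0 < ε := lt_of_lt_of_le (by positivity) hε.1
    have hεk : ε * (k : ℝ) ^ 3 ≤ 1 :=
      (mul_le_mul_of_nonneg_right hε.2 (by positivity)).trans_eq (inv_mul_cancel₀ (by positivity))
    have hfirst : 0 ≤ (1 - (ε * (k : ℝ) ^ 3) ^ ((d : ℝ) / 2)) * Mh *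
        (volume (closedBall z ρ)).toReal :=
      mul_nonneg (mul_nonneg (sub_nonneg.2 (Real.rpow_le_one (by positivity) hεk (by positivity)))
        hMh0) ENNReal.toReal_nonneg
    have hslack : 0 ≤ (Mg + Mh) / k := by positivity
    calc _ ≤ 3 / k * (Mg * a + Mh * b) := hbound k hk ε hε
      _ = (3 * a + 1) / k * Mg + (3 * b + 1) / k * Mh - (Mg + Mh) / k := by ring
      _ ≤ _ := by linarith
  · filter_upwards [(tendsto_const_div_atTop_nhds_zero_nat (3 * (Mg * a + Mh * b))).eventually
      (gt_mem_nhds hη), eventually_ge_atTop 1] with k hkη hk ε hε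
    calc _ ≤ 3 / k * (Mg * a + Mh * b) := hbound k hk ε hε
      _ = 3 * (Mg * a + Mh * b) / k := by ring
      _ ≤ η := hkη.le
end
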